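/- arXiv:1611.09181 — 11 statements merged into one kernel-verified Lean document; each statement's English description precedes it below -/
import Mathlib

section
/- Define S(n) = ∑_{k=0}^{⌊n/2⌋} B(n−k, n−2k). Then for every n ≥ 1, S(n) − 2·S(n−1) = F_{n−1}. -/
/-- Bernoulli's triangle: the partial sums of binomial coefficients. -/
def bernoulli2 (n k : ℕ) : ℕ := ∑ q ∈ Finset.range (k + 1), n.choose q

/-- The sum over the path following direction (2,-1) from (n,n) in Bernoulli's triangle. -/
def S2 (n : ℕ) : ℕ := ∑ k ∈ Finset.range (n / 2 + 1), bernoulli2 (n - k) (n - 2 * k)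

lemma bernoulli2_pascal (a b : ℕ) :
    bernoulli2 (a + 1) (b + 1) = 2 * bernoulli2 a b + a.choose (b + 1) := by
  unfold bernoulli2
  rw [Finset.sum_range_succ' (fun q => (a+1).choose q)]
  simp only [Nat.choose_succ_succ, Nat.choose_zero_right, Nat.succ_eq_add_one]
  rw [Finset.sum_add_distrib]
  have h : ∑ q ∈ Finset.range (b + 1), a.choose (q + 1) + 1
      = ∑ q ∈ Finset.range (b + 2), a.choose q := by
    rw [Finset.sum_range_succ' (fun q => a.choose q)]
    simp
  have h2 : ∑ q ∈ Finset.range (b + 2), a.choose q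
      = ∑ q ∈ Finset.range (b + 1), a.choose q + a.choose (b + 1) :=
    Finset.sum_range_succ _ _
  omega

lemma fib_diag (M : ℕ) :
    ∑ j ∈ Finset.range (M + 1), (M - j).choose j = Nat.fib (M + 1) := by
  rw [Nat.fib_succ_eq_sum_choose, Finset.Nat.sum_antidiagonal_eq_sum_range_succ_mk,
    ← Finset.sum_range_reflect]
  apply Finset.sum_congr rfl
  intro j hj
  simp only [Finset.mem_range] at hj
  congr 1 <;> omega

lemma key (m : ℕ) : S2 (m + 1) = 2 * S2 m + Nat.fib m := by
  rcases Nat.even_or_odd m with ⟨t, rfl⟩ | ⟨t, rfl⟩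
  · -- m = 2t (t + t)
    have hm : t + t = 2 * t := by ring
    rw [hm]
    unfold S2
    have h1 : (2 * t + 1) / 2 = t := by omega
    have h2 : (2 * t) / 2 = t := by omega
    rw [h1, h2]
    have hterm : ∀ k ∈ Finset.range (t + 1),
        bernoulli2 (2 * t + 1 - k) (2 * t + 1 - 2 * k)
          = 2 * bernoulli2 (2 * t - k) (2 * t - 2 * k)
            + (2 * t - k).choose (2 * t - 2 * k + 1) := by
      intro k hk
      simp only [Finset.mem_range] at hk
      have e1 : 2 * t + 1 - k = (2 * t - k) + 1 := by omega
      have e2 : 2 * t + 1 - 2 * k = (2 * t - 2 * k) + 1 := by omega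
      rw [e1, e2, bernoulli2_pascal]
    rw [Finset.sum_congr rfl hterm, Finset.sum_add_distrib, ← Finset.mul_sum]
    congr 1
    -- ∑ k in range (t+1), C(2t-k, 2t-2k+1) = fib (2t)
    rw [Finset.sum_range_succ' (fun k => (2 * t - k).choose (2 * t - 2 * k + 1))]
    have hz : (2 * t - 0).choose (2 * t - 2 * 0 + 1) = 0 := by
      simp [Nat.choose_eq_zero_of_lt]
    rw [hz, add_zero]
    have hsymm : ∀ k ∈ Finset.range t,
        (2 * t - (k + 1)).choose (2 * t - 2 * (k + 1) + 1)
          = (2 * t - 1 - k).choose k := by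
      intro k hk
      simp only [Finset.mem_range] at hk
      have e1 : 2 * t - (k + 1) = 2 * t - 1 - k := by omega
      have e2 : 2 * t - 2 * (k + 1) + 1 = 2 * t - 1 - 2 * k := by omega
      rw [e1, e2]
      have h3 : 2 * t - 1 - 2 * k ≤ 2 * t - 1 - k := by omega
      rw [← Nat.choose_symm h3]
      congr 1
      omega
    rw [Finset.sum_congr rfl hsymm]
    cases t with
    | zero => simp
    | succ s =>
      have hfull := fib_diag (2 * s + 1)
      have hsub : ∑ j ∈ Finset.range (2 * s + 1 + 1), (2 * s + 1 - j).choose j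
          = ∑ j ∈ Finset.range (s + 1), (2 * s + 1 - j).choose j := by
        symm
        apply Finset.sum_subset
        · apply Finset.range_subset_range.mpr; omega
        · intro x hx hnx
          simp only [Finset.mem_range] at hx hnx
          exact Nat.choose_eq_zero_of_lt (by omega)
      rw [hsub] at hfull
      have hL : ∑ k ∈ Finset.range (s + 1), (2 * (s + 1) - 1 - k).choose k
          = ∑ j ∈ Finset.range (s + 1), (2 * s + 1 - j).choose j := by
        apply Finset.sum_congr rfl
        intro k _
        congr 1 <;> omega
      rw [hL, hfull]
      congr 1 <;> omega
  · -- m = 2t + 1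
    unfold S2
    have h1 : (2 * t + 1 + 1) / 2 = t + 1 := by omega
    have h2 : (2 * t + 1) / 2 = t := by omega
    rw [h1, h2]
    rw [Finset.sum_range_succ (fun k => bernoulli2 (2 * t + 1 + 1 - k) (2 * t + 1 + 1 - 2 * k))]
    have hlast : bernoulli2 (2 * t + 1 + 1 - (t + 1)) (2 * t + 1 + 1 - 2 * (t + 1)) = 1 := by
      have e : 2 * t + 1 + 1 - 2 * (t + 1) = 0 := by omega
      rw [e]
      simp [bernoulli2]
    rw [hlast]
    have hterm : ∀ k ∈ Finset.range (t + 1),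
        bernoulli2 (2 * t + 1 + 1 - k) (2 * t + 1 + 1 - 2 * k)
          = 2 * bernoulli2 (2 * t + 1 - k) (2 * t + 1 - 2 * k)
            + (2 * t + 1 - k).choose (2 * t + 1 - 2 * k + 1) := by
      intro k hk
      simp only [Finset.mem_range] at hk
      have e1 : 2 * t + 1 + 1 - k = (2 * t + 1 - k) + 1 := by omega
      have e2 : 2 * t + 1 + 1 - 2 * k = (2 * t + 1 - 2 * k) + 1 := by omega
      rw [e1, e2, bernoulli2_pascal]
    rw [Finset.sum_congr rfl hterm, Finset.sum_add_distrib, ← Finset.mul_sum]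
    have hrest : ∑ k ∈ Finset.range (t + 1), (2 * t + 1 - k).choose (2 * t + 1 - 2 * k + 1) + 1
        = Nat.fib (2 * t + 1) := by
      rw [Finset.sum_range_succ' (fun k => (2 * t + 1 - k).choose (2 * t + 1 - 2 * k + 1))]
      have hz : (2 * t + 1 - 0).choose (2 * t + 1 - 2 * 0 + 1) = 0 := by
        simp [Nat.choose_eq_zero_of_lt]
      rw [hz, add_zero]
      have hsymm : ∀ k ∈ Finset.range t,
          (2 * t + 1 - (k + 1)).choose (2 * t + 1 - 2 * (k + 1) + 1)
            = (2 * t - k).choose k := by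
        intro k hk
        simp only [Finset.mem_range] at hk
        have e1 : 2 * t + 1 - (k + 1) = 2 * t - k := by omega
        have e2 : 2 * t + 1 - 2 * (k + 1) + 1 = 2 * t - 2 * k := by omega
        rw [e1, e2]
        have h3 : 2 * t - 2 * k ≤ 2 * t - k := by omega
        rw [← Nat.choose_symm h3]
        congr 1
        omega
      rw [Finset.sum_congr rfl hsymm]
      have hfull := fib_diag (2 * t)
      have hsub : ∑ j ∈ Finset.range (2 * t + 1), (2 * t - j).choose j
          = ∑ j ∈ Finset.range (t + 1), (2 * t - j).choose j := by
        symm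
        apply Finset.sum_subset
        · apply Finset.range_subset_range.mpr; omega
        · intro x hx hnx
          simp only [Finset.mem_range] at hx hnx
          exact Nat.choose_eq_zero_of_lt (by omega)
      rw [hsub, Finset.sum_range_succ] at hfull
      have : (2 * t - t).choose t = 1 := by
        have : 2 * t - t = t := by omega
        rw [this, Nat.choose_self]
      omega
    omega

theorem S2_recurrence (n : ℕ) (hn : 1 ≤ n) :
    (S2 n : ℤ) - 2 * (S2 (n - 1) : ℤ) = (Nat.fib (n - 1) : ℤ) := by
  cases n with
  | zero => omega
  | succ m =>
    have h := key m
    simp only [Nat.add_sub_cancel]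
    push_cast [h]
    ring
end

section
/- For every n ≥ 0, ∑_{k=0}^{⌊n/2⌋} ∑_{q=0}^{n−2k} binom(n−k, q) = 2^{n+1} − F_{n+2}. -/
open Finset

private def fS2 (n : ℕ) : ℤ :=
  ∑ k ∈ Finset.range (n / 2 + 1), ∑ q ∈ Finset.range (n - 2 * k + 1),
      ((n - k).choose q : ℤ)

private lemma row_sum (m : ℕ) : (∑ q ∈ range (m + 1), (m.choose q : ℤ)) = 2 ^ m := by
  have := Nat.sum_range_choose m
  exact_mod_cast congrArg (Nat.cast : ℕ → ℤ) this

private lemma inner_pascal (N M : ℕ) :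
    (∑ q ∈ range (M + 1), ((N + 1).choose q : ℤ)) =
      (∑ q ∈ range (M + 1), (N.choose q : ℤ)) + ∑ q ∈ range M, (N.choose q : ℤ) := by
  induction M with
  | zero => simp
  | succ m ih =>
    rw [sum_range_succ, ih, sum_range_succ (n := m + 1), sum_range_succ (n := m)]
    push_cast [Nat.choose_succ_succ]
    ring

private lemma fS2_succ (n : ℕ) : fS2 (n + 1) = 2 ^ (n + 1) +
    ∑ k ∈ range (n / 2 + 1), ∑ q ∈ range (n - 2 * k), ((n - k).choose q : ℤ) := by
  have h1 : fS2 (n + 1) =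
      (∑ k ∈ range ((n + 1) / 2), ∑ q ∈ range (n - 2 * k), ((n - k).choose q : ℤ))
        + ∑ q ∈ range (n + 2), ((n + 1).choose q : ℤ) := by
    unfold fS2
    rw [sum_range_succ']
    congr 1
    apply sum_congr rfl
    intro k hk
    simp only [mem_range] at hk
    have e1 : n + 1 - 2 * (k + 1) + 1 = n - 2 * k := by omega
    have e2 : n + 1 - (k + 1) = n - k := by omega
    rw [e1, e2]
  have h2 : (∑ k ∈ range ((n + 1) / 2), ∑ q ∈ range (n - 2 * k), ((n - k).choose q : ℤ))
      = ∑ k ∈ range (n / 2 + 1), ∑ q ∈ range (n - 2 * k), ((n - k).choose q : ℤ) := by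
    apply sum_subset
    · intro x hx
      simp only [mem_range] at *
      omega
    · intro x hx hnx
      simp only [mem_range] at hx hnx
      have : n - 2 * x = 0 := by omega
      simp [this]
  rw [h1, h2, row_sum]
  ring

private lemma fS2_step (n : ℕ) : fS2 (n + 2) = fS2 (n + 1) + fS2 n + 2 ^ (n + 1) := by
  have key : fS2 (n + 2) = 2 ^ (n + 2) +
      ∑ k ∈ range (n / 2 + 1),
        ((∑ q ∈ range (n - 2 * k + 1), ((n - k).choose q : ℤ)) +
          ∑ q ∈ range (n - 2 * k), ((n - k).choose q : ℤ)) := by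
    unfold fS2
    have e0 : (n + 2) / 2 + 1 = n / 2 + 1 + 1 := by omega
    rw [e0, sum_range_succ']
    rw [add_comm]
    congr 1
    · simp only [Nat.mul_zero, Nat.sub_zero]
      exact row_sum (n + 2)
    · apply sum_congr rfl
      intro k hk
      simp only [mem_range] at hk
      have e1 : n + 2 - 2 * (k + 1) + 1 = n - 2 * k + 1 := by omega
      have e2 : n + 2 - (k + 1) = (n - k) + 1 := by omega
      rw [e1, e2, inner_pascal]
  rw [key, sum_add_distrib, fS2_succ]
  unfold fS2
  ring

theorem theoremS2 (n : ℕ) :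
    (∑ k ∈ Finset.range (n / 2 + 1), ∑ q ∈ Finset.range (n - 2 * k + 1),
        ((n - k).choose q : ℤ)) = 2 ^ (n + 1) - (Nat.fib (n + 2) : ℤ) := by
  suffices h : ∀ m, fS2 m = 2 ^ (m + 1) - (Nat.fib (m + 2) : ℤ) from h n
  intro m
  induction m using Nat.twoStepInduction with
  | zero => simp [fS2]
  | one => simp [fS2]; decide
  | more n ih1 ih2 =>
    have h : Nat.fib (n + 2 + 2) = Nat.fib (n + 1 + 2) + Nat.fib (n + 2) := by
      rw [Nat.fib_add_two (n := n + 2)]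
      exact Nat.add_comm _ _
    rw [fS2_step, ih2, ih1]
    push_cast [h]
    ring
end

section
/- Fix an integer c ≥ 2. Define S_c(n) = ∑_{k=0}^{⌊n/c⌋} B(n − (c−1)k, n − ck) and λ_n = S_c(n) − 2·S_c(n−1) for n ≥ 1. Then λ_n = 0 for 1 ≤ n ≤ c−1, λ_c = 1, and λ_n = λ_{n−1} + λ_{n−c} for every n > c. -/
/-- The sum over the path following direction (c, 1-c) from (n,n) in Bernoulli's triangle. -/
def Spath (c n : ℕ) : ℕ :=
  ∑ k ∈ Finset.range (n / c + 1), bernoulli2 (n - (c - 1) * k) (n - c * k)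

/-- λ_n(c) = S_c(n) - 2 S_c(n-1), as an integer. -/
def lambda (c n : ℕ) : ℤ := (Spath c n : ℤ) - 2 * (Spath c (n - 1) : ℤ)


/-! Pascal's rule `B(a+1, b+1) = 2 B(a, b) + C(a, b+1)`, applied termwise, turns
`S_c(n) - 2 S_c(n-1)` into the single sum `∑_k C(n-1-(c-1)k, n-ck)`. Reflecting each binomial
coefficient, this is the diagonal sum `F(n-c) = ∑_j C(n-c-(c-1)j, j)` of Pascal's triangle,
which counts compositions of `n - c` into parts `1` and `c`; hence `F(m) = 1` for `m < c` and
`F(m) = F(m-1) + F(m-c)` for `m ≥ c`. -/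

open Finset

theorem Nat.sub_one_mul_add_self {c : ℕ} (hc : 0 < c) (j : ℕ) : (c - 1) * j + j = c * j := by
  rw [← Nat.succ_mul, Nat.succ_eq_add_one, Nat.sub_add_cancel hc]

theorem sum_range_succ_choose_succ (a b : ℕ) :
    ∑ q ∈ range (b + 1), (a + 1).choose q = 2 * ∑ q ∈ range b, a.choose q + a.choose b := by
  induction b with
  | zero => simp
  | succ b ih =>
    rw [sum_range_succ, ih, sum_range_succ, Nat.choose_succ_succ]
    ring

theorem choose_succ_sub_mul_succ (m a j : ℕ) :
    (m + 1 - a * j).choose (j + 1) = (m - a * j).choose j + (m - a * j).choose (j + 1) := by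
  rcases le_or_gt (a * j) m with h | h
  · rw [Nat.succ_sub h, Nat.choose_succ_succ]
  · obtain ⟨i, rfl⟩ : ∃ i, j = i + 1 := Nat.exists_eq_succ_of_ne_zero (by rintro rfl; simp at h)
    simp [Nat.sub_eq_zero_of_le h.le, Nat.sub_eq_zero_of_le h]

section binomial

variable {c : ℕ}

theorem choose_sub_mul_eq_zero (hc : 0 < c) {m j : ℕ} (hj : m / c < j) :
    (m - (c - 1) * j).choose j = 0 := by
  have hmj : m < j * c := Nat.lt_mul_of_div_lt hj hc
  have hj0 : 0 < j := Nat.zero_lt_of_lt hj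
  have := Nat.sub_one_mul_add_self hc j
  exact Nat.choose_eq_zero_of_lt (by rw [mul_comm] at hmj; omega)

theorem sum_choose_reflect (hc : 0 < c) (m : ℕ) :
    ∑ k ∈ range ((m + 1) / c + 1), (m - (c - 1) * k).choose (m + 1 - c * k) =
      ∑ j ∈ range ((m + 1) / c), (m + 1 - c - (c - 1) * j).choose j := by
  rw [sum_range_succ']
  simp only [Nat.mul_zero, Nat.sub_zero, Nat.choose_succ_self, add_zero]
  refine sum_congr rfl fun j hj => ?_
  have hcj : c * (j + 1) ≤ m + 1 :=
    (mul_comm c _).trans_le (Nat.mul_le_of_le_div _ _ _ (mem_range.mp hj))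
  have := Nat.sub_one_mul_add_self hc j
  rw [mul_add, mul_one] at hcj
  have h1 : m - (c - 1) * (j + 1) = (m + 1 - c * (j + 1)) + j := by
    rw [mul_add, mul_add, mul_one, mul_one]; omega
  have h2 : m + 1 - c - (c - 1) * j = (m + 1 - c * (j + 1)) + j := by
    rw [mul_add, mul_one]; omega
  rw [h1, h2, Nat.choose_symm_add]

end binomial

section Spath

variable {c : ℕ}

theorem Spath_eq_sum_range (hc : 0 < c) {n N : ℕ} (hN : n / c < N) :
    Spath c n = ∑ k ∈ range N, ∑ q ∈ range (n + 1 - c * k), (n - (c - 1) * k).choose q := by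
  rw [eventually_constant_sum _ (Nat.succ_le_of_lt hN)]
  · refine sum_congr rfl fun k hk => ?_
    have : c * k ≤ n :=
      (mul_comm c k).trans_le (Nat.mul_le_of_le_div _ _ _ (Nat.lt_succ_iff.mp (mem_range.mp hk)))
    rw [bernoulli2, Nat.sub_add_comm this]
  · intro k hk
    have : n < k * c := Nat.lt_mul_of_div_lt hk hc
    rw [Nat.sub_eq_zero_of_le (mul_comm c k ▸ this), sum_range_zero]

/-- When `c ∣ m + 1`, the last term `k = (m + 1) / c` contributes `bernoulli2 _ 0 = 1` to the
left side and `(_).choose 0 = 1` to the sum on the right. -/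
theorem Spath_succ (hc : 0 < c) (m : ℕ) :
    Spath c (m + 1) = 2 * Spath c m +
      ∑ k ∈ range ((m + 1) / c + 1), (m - (c - 1) * k).choose (m + 1 - c * k) := by
  rw [Spath_eq_sum_range hc (Nat.lt_succ_self _),
    Spath_eq_sum_range hc (Nat.lt_succ_of_le (Nat.div_le_div_right (Nat.le_succ m))),
    mul_sum, ← sum_add_distrib]
  refine sum_congr rfl fun k hk => ?_
  have hck : c * k ≤ m + 1 :=
    (mul_comm c k).trans_le (Nat.mul_le_of_le_div _ _ _ (Nat.lt_succ_iff.mp (mem_range.mp hk)))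
  have := Nat.sub_one_mul_add_self hc k
  rw [show m + 1 + 1 - c * k = (m + 1 - c * k) + 1 by omega,
    show m + 1 - (c - 1) * k = (m - (c - 1) * k) + 1 by rcases k with _ | k <;> omega,
    sum_range_succ_choose_succ]

end Spath

/-- The number of compositions of `m` into parts `1` and `c`: one with `j` parts equal to `c`
has `m - (c - 1) * j` parts in all. -/
def diagSum (c m : ℕ) : ℕ := ∑ j ∈ range (m / c + 1), (m - (c - 1) * j).choose j

section diagSum

variable {c : ℕ}

theorem diagSum_eq_sum_range (hc : 0 < c) {m N : ℕ} (hN : m / c < N) :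
    diagSum c m = ∑ j ∈ range N, (m - (c - 1) * j).choose j :=
  (eventually_constant_sum (fun _ hj => choose_sub_mul_eq_zero hc hj) hN).symm

theorem diagSum_of_lt {m : ℕ} (hm : m < c) : diagSum c m = 1 := by
  simp [diagSum, Nat.div_eq_of_lt hm]

theorem diagSum_add (hc : 0 < c) (m : ℕ) :
    diagSum c (m + c) = diagSum c (m + c - 1) + diagSum c m := by
  have hN : ∀ k, k ≤ m + c → k / c < m + c + 1 := fun k hk =>
    (Nat.div_le_self k c).trans_lt (Nat.lt_succ_of_le hk)
  have hpascal : ∀ j, (m + c - (c - 1) * (j + 1)).choose (j + 1) =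
      (m - (c - 1) * j).choose j + (m + c - 1 - (c - 1) * (j + 1)).choose (j + 1) := by
    intro j
    rw [mul_add, mul_one, show m + c - ((c - 1) * j + (c - 1)) = m + 1 - (c - 1) * j by omega,
      show m + c - 1 - ((c - 1) * j + (c - 1)) = m - (c - 1) * j by omega,
      choose_succ_sub_mul_succ]
  rw [diagSum_eq_sum_range hc (hN _ le_rfl), diagSum_eq_sum_range hc (hN _ (Nat.sub_le _ _)),
    diagSum_eq_sum_range hc (N := m + c) ((Nat.div_le_self m c).trans_lt (by omega)),
    sum_range_succ', sum_range_succ', sum_congr rfl fun j _ => hpascal j, sum_add_distrib]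
  simp only [Nat.choose_zero_right]
  ring

end diagSum

section lambda

variable {c n : ℕ}

theorem lambda_succ (hc : 0 < c) (m : ℕ) :
    lambda c (m + 1) =
      ∑ k ∈ range ((m + 1) / c + 1), ((m - (c - 1) * k).choose (m + 1 - c * k) : ℤ) := by
  rw [lambda, Spath_succ hc, Nat.add_sub_cancel]
  push_cast
  ring

theorem lambda_eq_sum_range (hc : 0 < c) (hn : 0 < n) :
    lambda c n = ∑ j ∈ range (n / c), ((n - c - (c - 1) * j).choose j : ℤ) := by
  obtain ⟨m, rfl⟩ := Nat.exists_eq_succ_of_ne_zero hn.ne'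
  rw [lambda_succ hc]
  exact_mod_cast sum_choose_reflect hc m

theorem lambda_eq_zero_of_lt (hn : 0 < n) (hnc : n < c) : lambda c n = 0 := by
  rw [lambda_eq_sum_range (hn.trans hnc) hn, Nat.div_eq_of_lt hnc, sum_range_zero]

theorem lambda_eq_diagSum (hc : 0 < c) (hn : c ≤ n) : lambda c n = diagSum c (n - c) := by
  rw [lambda_eq_sum_range hc (hc.trans_le hn), Nat.div_eq_sub_div hc hn, diagSum]
  push_cast
  rfl

end lambda

theorem lambda_recurrence (c : ℕ) (hc : 2 ≤ c) :
    (∀ n, 1 ≤ n → n ≤ c - 1 → lambda c n = 0) ∧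
    lambda c c = 1 ∧
    (∀ n, c < n → lambda c n = lambda c (n - 1) + lambda c (n - c)) := by
  have hc0 : 0 < c := by omega
  refine ⟨fun n hn hnc => lambda_eq_zero_of_lt hn (by omega), ?_, fun n hn => ?_⟩
  · rw [lambda_eq_diagSum hc0 le_rfl, Nat.sub_self, diagSum_of_lt hc0, Nat.cast_one]
  rw [lambda_eq_diagSum hc0 hn.le, lambda_eq_diagSum hc0 (Nat.le_sub_one_of_lt hn)]
  rcases lt_or_ge (n - c) c with hlt | hge
  · rw [lambda_eq_zero_of_lt (by omega) hlt, diagSum_of_lt hlt, diagSum_of_lt (by omega),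
      add_zero]
  · obtain ⟨m, rfl⟩ : ∃ m, n = m + c + c := ⟨n - c - c, by omega⟩
    rw [lambda_eq_diagSum hc0 hge, show m + c + c - 1 - c = m + c - 1 by omega, Nat.add_sub_cancel,
      Nat.add_sub_cancel, diagSum_add hc0]
    push_cast
    rfl
end

section
/- Fix an integer c ≥ 2. Define S_c(n) = ∑_{k=0}^{⌊n/c⌋} B(n − (c−1)k, n − ck) and λ_n = S_c(n) − 2·S_c(n−1) for n ≥ 1. Then for every n ≥ c, λ_n = ∑_{i=0}^{⌊(n−c)/(c−1)⌋} binom(n − c − (c−1)i, i). -/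
lemma bern_rec (n k : ℕ) : bernoulli2 (n+1) (k+1) = 2 * bernoulli2 n k + n.choose (k+1) := by
  unfold bernoulli2
  have h1 : ∑ q ∈ Finset.range (k+1+1), (n+1).choose q
      = ∑ q ∈ Finset.range (k+1), (n+1).choose (q+1) + 1 := by
    rw [Finset.sum_range_succ' (fun q => (n+1).choose q)]; simp
  have h2a : ∑ q ∈ Finset.range (k+1+1), n.choose q
      = ∑ q ∈ Finset.range (k+1), n.choose (q+1) + 1 := by
    rw [Finset.sum_range_succ' (fun q => n.choose q)]; simp
  have h2b : ∑ q ∈ Finset.range (k+1+1), n.choose q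
      = ∑ q ∈ Finset.range (k+1), n.choose q + n.choose (k+1) := Finset.sum_range_succ _ _
  have h3 : ∑ q ∈ Finset.range (k+1), (n+1).choose (q+1)
      = ∑ q ∈ Finset.range (k+1), n.choose q + ∑ q ∈ Finset.range (k+1), n.choose (q+1) := by
    rw [← Finset.sum_add_distrib]
    exact Finset.sum_congr rfl (fun q _ => Nat.choose_succ_succ n q)
  omega

lemma spath_rec (c m : ℕ) (hc : 2 ≤ c) :
    Spath c (m+1) = 2 * Spath c m
      + ∑ k ∈ Finset.range ((m+1) / c + 1), (m - (c-1)*k).choose (m+1 - c*k) := by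
  have hc0 : 0 < c := by omega
  have key : ∀ k, k ≤ m / c →
      bernoulli2 (m+1 - (c-1)*k) (m+1 - c*k)
        = 2 * bernoulli2 (m - (c-1)*k) (m - c*k) + (m - (c-1)*k).choose (m+1 - c*k) := by
    intro k hk
    have hck : c * k ≤ m := le_trans (Nat.mul_le_mul_left c hk) (Nat.mul_div_le m c)
    have hkck : k ≤ c * k := Nat.le_mul_of_pos_left k hc0
    have e1 : (c-1)*k + k = c*k := by rw [Nat.sub_one_mul]; omega
    have e2 : m + 1 - (c-1)*k = (m - (c-1)*k) + 1 := by omega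
    have e3 : m + 1 - c*k = (m - c*k) + 1 := by omega
    rw [e2, e3, bern_rec, ← e3]
  unfold Spath
  rw [Nat.succ_div]
  by_cases hd : c ∣ (m+1)
  · simp only [hd, if_true]
    have hdc : (m+1)/c = m/c + 1 := by rw [Nat.succ_div]; simp [hd]
    have hlast : c * (m/c + 1) = m + 1 := by rw [← hdc]; exact Nat.mul_div_cancel' hd
    rw [Finset.sum_range_succ, Finset.sum_range_succ (fun k => (m - (c-1)*k).choose (m+1 - c*k))]
    have hz : m + 1 - c * (m/c+1) = 0 := by omega
    have hb : bernoulli2 (m + 1 - (c-1)*(m/c+1)) (m + 1 - c*(m/c+1)) = 1 := by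
      rw [hz]; simp [bernoulli2]
    rw [hb, hz, Nat.choose_zero_right]
    have hmain : ∑ k ∈ Finset.range (m/c+1), bernoulli2 (m+1 - (c-1)*k) (m+1 - c*k)
        = ∑ k ∈ Finset.range (m/c+1),
            (2 * bernoulli2 (m - (c-1)*k) (m - c*k) + (m - (c-1)*k).choose (m+1 - c*k)) :=
      Finset.sum_congr rfl (fun k hk => key k (Nat.lt_succ_iff.mp (Finset.mem_range.mp hk)))
    rw [hmain, Finset.sum_add_distrib, ← Finset.mul_sum]
    ring
  · simp only [hd, if_false, add_zero]
    rw [Finset.mul_sum, ← Finset.sum_add_distrib]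
    exact Finset.sum_congr rfl (fun k hk => key k (Nat.lt_succ_iff.mp (Finset.mem_range.mp hk)))

theorem lambda_explicit (c : ℕ) (hc : 2 ≤ c) (n : ℕ) (hn : c ≤ n) :
    lambda c n =
      ∑ i ∈ Finset.range ((n - c) / (c - 1) + 1),
        ((n - c - (c - 1) * i).choose i : ℤ) := by
  have hc0 : 0 < c := by omega
  obtain ⟨m, rfl⟩ : ∃ m, n = m + 1 := ⟨n - 1, by omega⟩
  have hT : (∑ k ∈ Finset.range ((m+1) / c + 1), (m - (c-1)*k).choose (m+1 - c*k))
      = ∑ i ∈ Finset.range ((m+1 - c) / (c - 1) + 1), (m+1 - c - (c - 1) * i).choose i := by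
    set N := (m+1) / c with hN
    have hN1 : 1 ≤ N := (Nat.one_le_div_iff hc0).mpr hn
    rw [Finset.sum_range_succ' (fun k => (m - (c-1)*k).choose (m+1 - c*k)) N]
    have h0 : (m - (c-1)*0).choose (m+1 - c*0) = 0 := by
      simp only [Nat.mul_zero, Nat.sub_zero]
      exact Nat.choose_eq_zero_of_lt (by omega)
    rw [h0, add_zero]
    have hterm : ∀ i ∈ Finset.range N,
        (m - (c-1)*(i+1)).choose (m+1 - c*(i+1)) = (m+1 - c - (c-1)*i).choose i := by
      intro i hi
      have hiN : i + 1 ≤ N := Finset.mem_range.mp hi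
      have hcN : c * N ≤ m+1 := Nat.mul_div_le (m+1) c
      have hci : c * (i+1) ≤ c * N := Nat.mul_le_mul_left c hiN
      have e1 : (c-1)*(i+1) + (i+1) = c*(i+1) := by
        rw [Nat.sub_one_mul]
        have : i + 1 ≤ c * (i+1) := Nat.le_mul_of_pos_left _ hc0
        omega
      have e2 : (c-1)*i + i = c*i := by
        rw [Nat.sub_one_mul]
        have : i ≤ c * i := Nat.le_mul_of_pos_left _ hc0
        omega
      have e3 : c*(i+1) = c*i + c := by ring
      have hb : m - (c-1)*(i+1) = (m+1 - c*(i+1)) + i := by omega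
      have hb2 : (m+1 - c*(i+1)) + i = m+1 - c - (c-1)*i := by omega
      rw [hb]
      have hs : ((m+1 - c*(i+1)) + i).choose ((m+1 - c*(i+1)) + i - i)
          = ((m+1 - c*(i+1)) + i).choose i := Nat.choose_symm (Nat.le_add_left i _)
      simp only [Nat.add_sub_cancel] at hs
      rw [hs, hb2]
    rw [Finset.sum_congr rfl hterm]
    have hNle : N ≤ (m+1 - c) / (c - 1) + 1 := by
      have h1 : (N - 1) * (c - 1) ≤ m+1 - c := by
        have h2 : N * c ≤ m+1 := by rw [mul_comm]; exact Nat.mul_div_le (m+1) c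
        calc (N-1)*(c-1) ≤ (N-1)*c := Nat.mul_le_mul_left _ (by omega)
          _ ≤ m+1 - c := by
              have h3 : (N-1)*c + c = N*c := by
                rw [Nat.sub_one_mul]
                have : c ≤ N * c := Nat.le_mul_of_pos_left _ hN1
                omega
              omega
      have := (Nat.le_div_iff_mul_le (by omega : 0 < c - 1)).mpr h1
      omega
    rw [← Finset.sum_range_add_sum_Ico (fun i => (m+1 - c - (c-1)*i).choose i) hNle]
    have hz : ∀ i ∈ Finset.Ico N ((m+1 - c) / (c - 1) + 1), (m+1 - c - (c-1)*i).choose i = 0 := by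
      intro i hi
      obtain ⟨hi1, _⟩ := Finset.mem_Ico.mp hi
      have hi0 : 1 ≤ i := le_trans hN1 hi1
      have hlt : m+1 < (i+1) * c := (Nat.div_lt_iff_lt_mul hc0).mp (by omega)
      have e2 : (c-1)*i + i = c*i := by
        rw [Nat.sub_one_mul]
        have : i ≤ c * i := Nat.le_mul_of_pos_left _ hc0
        omega
      have e3 : (i+1)*c = c*i + c := by ring
      exact Nat.choose_eq_zero_of_lt (by omega)
    rw [Finset.sum_eq_zero hz, add_zero]
  unfold lambda
  simp only [Nat.add_sub_cancel]
  rw [spath_rec c m hc, Nat.cast_add, hT, Nat.cast_sum]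
  push_cast
  ring
end

section
/- Fix an integer c ≥ 2. For every n ≥ 0, ∑_{k=0}^{⌊n/c⌋} ∑_{q=0}^{n−ck} binom(n − (c−1)k, q) = 2^n + ∑_{k=1}^{n} 2^{n−k} · ∑_{i=0}^{⌊(k−c)/(c−1)⌋} binom(k − c − (c−1)i, i), where the inner sum over i is empty (equal to 0) whenever k < c. -/
lemma Trec (M N : ℕ) : ∑ q ∈ Finset.range (N+2), (M+1).choose q
    = 2 * ∑ q ∈ Finset.range (N+1), M.choose q + M.choose (N+1) := by
  rw [Finset.sum_range_succ' _ (N+1)]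
  simp only [Nat.choose_succ_succ, Finset.sum_add_distrib, Nat.choose_zero_right]
  rw [show (∑ i ∈ Finset.range (N+1), M.choose (i+1)) = ∑ q ∈ Finset.range (N+2), M.choose q - 1 by
    rw [Finset.sum_range_succ' _ (N+1)]; simp]
  rw [Finset.sum_range_succ _ (N+1)]
  have h1 : 1 ≤ ∑ q ∈ Finset.range (N+1), M.choose q := by
    calc 1 = M.choose 0 := by simp
    _ ≤ _ := Finset.single_le_sum (f := fun q => M.choose q) (by intros; positivity) (by simp)
  omega

lemma cmul (c i : ℕ) (hc : 1 ≤ c) : c * i = (c-1) * i + i := by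
  conv_lhs => rw [← Nat.succ_pred_eq_of_pos (show 0 < c by omega)]
  rw [Nat.succ_mul]; rfl

lemma key_s8 (c : ℕ) (hc : 2 ≤ c) (n : ℕ) :
    (∑ k ∈ Finset.range ((n+1) / c + 1), ∑ q ∈ Finset.range ((n+1) - c * k + 1),
        ((n+1) - (c - 1) * k).choose q)
    = 2 * (∑ k ∈ Finset.range (n / c + 1), ∑ q ∈ Finset.range (n - c * k + 1),
        (n - (c - 1) * k).choose q)
      + ∑ i ∈ Finset.range ((n+1) / c), ((n + 1 - c) - (c-1) * i).choose i := by
  have hdivle : c * (n / c) ≤ n := Nat.mul_div_le n c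
  have hterm : ∀ k, c * k ≤ n →
      (∑ q ∈ Finset.range ((n+1) - c * k + 1), ((n+1) - (c - 1) * k).choose q)
      = 2 * (∑ q ∈ Finset.range (n - c * k + 1), (n - (c - 1) * k).choose q)
        + (n - (c-1) * k).choose (n - c * k + 1) := by
    intro k hk
    have h1 : (c-1) * k ≤ n := le_trans (Nat.mul_le_mul_right k (by omega)) hk
    have e1 : (n+1) - (c-1)*k = (n - (c-1)*k) + 1 := by omega
    have e2 : (n+1) - c*k + 1 = (n - c*k) + 2 := by omega
    rw [e1, e2, Trec]
  have hE : ∀ i, c * (i+1) ≤ n →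
      (n - (c-1) * (i+1)).choose (n - c * (i+1) + 1) = ((n + 1 - c) - (c-1) * i).choose i := by
    intro i hi
    have h1 : c*(i+1) = c*i + c := by ring
    have h2 : (c-1)*(i+1) = (c-1)*i + (c-1) := by ring
    have h3 := cmul c i (by omega)
    have hb : n - c*(i+1) + 1 ≤ n - (c-1)*(i+1) := by omega
    rw [← Nat.choose_symm hb]
    congr 1 <;> omega
  have hmain : (∑ k ∈ Finset.range (n / c + 1), ∑ q ∈ Finset.range ((n+1) - c * k + 1),
        ((n+1) - (c - 1) * k).choose q)
      = 2 * (∑ k ∈ Finset.range (n / c + 1), ∑ q ∈ Finset.range (n - c * k + 1),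
        (n - (c - 1) * k).choose q)
      + ∑ i ∈ Finset.range (n / c), ((n + 1 - c) - (c-1) * i).choose i := by
    have hck : ∀ k ∈ Finset.range (n / c + 1), c * k ≤ n := by
      intro k hk
      rw [Finset.mem_range] at hk
      exact le_trans (Nat.mul_le_mul_left c (by omega)) hdivle
    rw [Finset.sum_congr rfl (fun k hk => hterm k (hck k hk)), Finset.sum_add_distrib,
      ← Finset.mul_sum]
    congr 1
    rw [Finset.sum_range_succ']
    have hE0 : (n - (c-1) * 0).choose (n - c * 0 + 1) = 0 :=
      Nat.choose_eq_zero_of_lt (by simp)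
    rw [hE0, add_zero]
    refine Finset.sum_congr rfl fun i hi => ?_
    rw [Finset.mem_range] at hi
    exact hE i (le_trans (Nat.mul_le_mul_left c (by omega)) hdivle)
  rw [Nat.succ_div]
  by_cases hdvd : c ∣ (n+1)
  · simp only [hdvd, if_true]
    have hq : (n+1)/c = n/c + 1 := by rw [Nat.succ_div, if_pos hdvd]
    have hck0 : c * (n/c + 1) = n + 1 := by rw [← hq]; exact Nat.mul_div_cancel' hdvd
    have hexp : c * (n/c + 1) = c * (n/c) + c := by ring
    have h3 := cmul c (n/c) (by omega)
    have hcc : c * (n/c) = n + 1 - c := by omega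
    have hlast : ((n + 1 - c) - (c-1) * (n/c)).choose (n/c) = 1 := by
      rw [show (n + 1 - c) - (c-1) * (n/c) = n/c by
        rw [← hcc, cmul c (n/c) (by omega), Nat.add_sub_cancel_left]]
      exact Nat.choose_self _
    have hsplit1 : (∑ i ∈ Finset.range (n/c + 1), ((n + 1 - c) - (c-1) * i).choose i)
        = (∑ i ∈ Finset.range (n/c), ((n + 1 - c) - (c-1) * i).choose i) + 1 := by
      rw [Finset.sum_range_succ, hlast]
    rw [Finset.sum_range_succ _ (n/c + 1), hmain, hck0, hsplit1]
    simp only [Nat.sub_self, Nat.zero_add, Finset.sum_range_one, Nat.choose_zero_right]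
    omega
  · simp only [hdvd, if_false, add_zero]
    exact hmain

lemma tail (c N : ℕ) (hc : 2 ≤ c) :
    (∑ i ∈ Finset.range (N / c), ((N - c) - (c-1) * i).choose i)
    = if c ≤ N then ∑ i ∈ Finset.range ((N - c) / (c-1) + 1), ((N - c) - (c-1) * i).choose i
      else 0 := by
  by_cases hcN : c ≤ N
  · simp only [hcN, if_true]
    set L := max (N / c) ((N - c) / (c-1) + 1) with hL
    have hzero : ∀ i, N / c ≤ i → ((N - c) - (c-1) * i).choose i = 0 := by
      intro i hi
      apply Nat.choose_eq_zero_of_lt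
      have h1 := Nat.div_add_mod N c
      have h2 : N % c < c := Nat.mod_lt _ (by omega)
      have h3 : c * (N/c) ≤ c * i := Nat.mul_le_mul_left c hi
      have h4 := cmul c i (by omega)
      have hi1 : 1 ≤ i := by
        have : 1 ≤ N / c := (Nat.one_le_div_iff (by omega)).2 hcN
        omega
      omega
    have hzero2 : ∀ i, (N - c) / (c-1) + 1 ≤ i → ((N - c) - (c-1) * i).choose i = 0 := by
      intro i hi
      apply Nat.choose_eq_zero_of_lt
      have hi1 : 1 ≤ i := le_trans (Nat.le_add_left 1 _) hi
      have h1 := Nat.div_add_mod (N - c) (c-1)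
      have h2 : (N - c) % (c-1) < c-1 := Nat.mod_lt _ (by omega)
      have h3 : (c-1) * ((N-c)/(c-1) + 1) ≤ (c-1) * i := Nat.mul_le_mul_left (c-1) hi
      have h4 : (c-1) * ((N-c)/(c-1) + 1) = (c-1) * ((N-c)/(c-1)) + (c-1) := by ring
      omega
    have e1 : (∑ i ∈ Finset.range (N / c), ((N - c) - (c-1) * i).choose i)
        = ∑ i ∈ Finset.range L, ((N - c) - (c-1) * i).choose i := by
      apply Finset.sum_subset (Finset.range_subset_range.2 (le_max_left _ _))
      intro i _ hi
      rw [Finset.mem_range, not_lt] at hi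
      exact hzero i hi
    have e2 : (∑ i ∈ Finset.range ((N - c) / (c-1) + 1), ((N - c) - (c-1) * i).choose i)
        = ∑ i ∈ Finset.range L, ((N - c) - (c-1) * i).choose i := by
      apply Finset.sum_subset (Finset.range_subset_range.2 (le_max_right _ _))
      intro i _ hi
      rw [Finset.mem_range, not_lt] at hi
      exact hzero2 i hi
    rw [e1, e2]
  · simp only [hcN, if_false]
    have : N / c = 0 := Nat.div_eq_of_lt (by omega)
    rw [this]
    simp

theorem corollary_path_sum (c : ℕ) (hc : 2 ≤ c) (n : ℕ) :
    (∑ k ∈ Finset.range (n / c + 1), ∑ q ∈ Finset.range (n - c * k + 1),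
        (n - (c - 1) * k).choose q) =
      2 ^ n + ∑ k ∈ Finset.Icc 1 n, 2 ^ (n - k) *
        (if c ≤ k then
          ∑ i ∈ Finset.range ((k - c) / (c - 1) + 1), (k - c - (c - 1) * i).choose i
         else 0) := by
  induction n with
  | zero => simp [Nat.zero_div]
  | succ n ih =>
    rw [key_s8 c hc n, ih, tail c (n+1) hc]
    rw [Finset.sum_Icc_succ_top (by omega : 1 ≤ n + 1)]
    have hsum : (∑ k ∈ Finset.Icc 1 n, 2 ^ (n + 1 - k) *
        (if c ≤ k then
          ∑ i ∈ Finset.range ((k - c) / (c - 1) + 1), (k - c - (c - 1) * i).choose i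
         else 0))
        = 2 * ∑ k ∈ Finset.Icc 1 n, 2 ^ (n - k) *
        (if c ≤ k then
          ∑ i ∈ Finset.range ((k - c) / (c - 1) + 1), (k - c - (c - 1) * i).choose i
         else 0) := by
      rw [Finset.mul_sum]
      refine Finset.sum_congr rfl fun k hk => ?_
      rw [Finset.mem_Icc] at hk
      rw [show n + 1 - k = (n - k) + 1 by omega, pow_succ]
      ring
    rw [hsum, Nat.sub_self, pow_zero, one_mul, pow_succ]
    ring
end

section
/- For every m ≥ 2 and every p ≥ 1, T^[m](2p+1) = T^[m](2p) + T^[m](2p−1). -/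
/-- Bernoulli's m-th order triangle: `bern 1 = binom`, and
`bern (m+1) n k = ∑_{q=0}^{k} bern m n q` (the value at `m = 0` is irrelevant). -/
def bern : ℕ → ℕ → ℕ → ℕ
  | 0, n, k => n.choose k
  | 1, n, k => n.choose k
  | m + 2, n, k => ∑ q ∈ Finset.range (k + 1), bern (m + 1) n q

/-- The sum over the path following direction (-1,-1) from (n,0) in the m-th order triangle. -/
def T (m n : ℕ) : ℕ := ∑ k ∈ Finset.range (n / 2 + 1), bern m (n - k) k

lemma bern_zero (m n : ℕ) : bern m n 0 = 1 := by
  induction m with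
  | zero => simp [bern]
  | succ m ih =>
    match m, ih with
    | 0, _ => simp [bern]
    | t + 1, ih => simpa [bern] using ih

lemma bern_pascal (m n k : ℕ) :
    bern m (n + 1) (k + 1) = bern m n (k + 1) + bern m n k := by
  induction m generalizing k with
  | zero => simp only [bern]; rw [Nat.choose_succ_succ]; simp [Nat.succ_eq_add_one]; omega
  | succ m ih =>
    match m, ih with
    | 0, _ => simp only [bern]; rw [Nat.choose_succ_succ]; simp [Nat.succ_eq_add_one]; omega
    | t + 1, ih =>
      simp only [bern]
      rw [Finset.sum_range_succ' (fun q => bern (t + 1) (n + 1) q) (k + 1),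
        Finset.sum_range_succ' (fun q => bern (t + 1) n q) (k + 1)]
      have : ∑ j ∈ Finset.range (k + 1), bern (t + 1) (n + 1) (j + 1)
          = ∑ j ∈ Finset.range (k + 1), (bern (t + 1) n (j + 1) + bern (t + 1) n j) :=
        Finset.sum_congr rfl fun j _ => ih j
      rw [this, Finset.sum_add_distrib, bern_zero, bern_zero]
      ring

lemma key_s10 (m q : ℕ) :
    ∑ j ∈ Finset.range (q + 1), bern m (2 * q + 2 - j) (j + 1)
      = ∑ j ∈ Finset.range (q + 1), bern m (2 * q + 1 - j) (j + 1)
        + ∑ j ∈ Finset.range (q + 1), bern m (2 * q + 1 - j) j := by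
  rw [← Finset.sum_add_distrib]
  refine Finset.sum_congr rfl fun j hj => ?_
  have hj' : j ≤ q := Nat.lt_succ_iff.mp (Finset.mem_range.mp hj)
  have h : 2 * q + 2 - j = (2 * q + 1 - j) + 1 := by omega
  rw [h, bern_pascal]

theorem T_odd (m : ℕ) (hm : 2 ≤ m) (p : ℕ) (hp : 1 ≤ p) :
    T m (2 * p + 1) = T m (2 * p) + T m (2 * p - 1) := by
  obtain ⟨q, rfl⟩ : ∃ q, p = q + 1 := ⟨p - 1, by omega⟩
  unfold T
  have h1 : (2 * (q + 1) + 1) / 2 = q + 1 := by omega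
  have h2 : (2 * (q + 1)) / 2 = q + 1 := by omega
  have h3 : (2 * (q + 1) - 1) / 2 = q := by omega
  rw [h1, h2, h3]
  rw [Finset.sum_range_succ' (fun k => bern m (2 * (q + 1) + 1 - k) k) (q + 1),
    Finset.sum_range_succ' (fun k => bern m (2 * (q + 1) - k) k) (q + 1)]
  have e1 : ∑ j ∈ Finset.range (q + 1), bern m (2 * (q + 1) + 1 - (j + 1)) (j + 1)
      = ∑ j ∈ Finset.range (q + 1), bern m (2 * q + 2 - j) (j + 1) :=
    Finset.sum_congr rfl fun j hj => by
      have : 2 * (q + 1) + 1 - (j + 1) = 2 * q + 2 - j := by omega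
      rw [this]
  have e2 : ∑ j ∈ Finset.range (q + 1), bern m (2 * (q + 1) - (j + 1)) (j + 1)
      = ∑ j ∈ Finset.range (q + 1), bern m (2 * q + 1 - j) (j + 1) :=
    Finset.sum_congr rfl fun j hj => by
      have : 2 * (q + 1) - (j + 1) = 2 * q + 1 - j := by omega
      rw [this]
  have e3 : ∑ k ∈ Finset.range (q + 1), bern m (2 * (q + 1) - 1 - k) k
      = ∑ k ∈ Finset.range (q + 1), bern m (2 * q + 1 - k) k :=
    Finset.sum_congr rfl fun k hk => by
      have : 2 * (q + 1) - 1 - k = 2 * q + 1 - k := by omega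
      rw [this]
  rw [e1, e2, e3, key_s10, bern_zero, bern_zero]
  ring
end

section
/- For every m ≥ 2 and every p ≥ 1, T^[m](2p) = T^[m](2p−1) + T^[m−1](2p). -/
lemma bern_succ_col (m n k : ℕ) :
    bern (m + 2) n (k + 1) = bern (m + 2) n k + bern (m + 1) n (k + 1) := by
  show (∑ q ∈ Finset.range (k + 1 + 1), bern (m + 1) n q) = _
  rw [Finset.sum_range_succ]
  rfl

lemma bern_zero_col (m n : ℕ) : bern (m + 2) n 0 = bern (m + 1) n 0 := by
  show (∑ q ∈ Finset.range 1, bern (m + 1) n q) = _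
  simp

theorem T_even (m : ℕ) (hm : 2 ≤ m) (p : ℕ) (hp : 1 ≤ p) :
    T m (2 * p) = T m (2 * p - 1) + T (m - 1) (2 * p) := by
  obtain ⟨m, rfl⟩ : ∃ m', m = m' + 2 := ⟨m - 2, by omega⟩
  obtain ⟨p, rfl⟩ : ∃ p', p = p' + 1 := ⟨p - 1, by omega⟩
  have hm1 : m + 2 - 1 = m + 1 := rfl
  unfold T
  have h1 : 2 * (p + 1) / 2 = p + 1 := by omega
  have h2 : (2 * (p + 1) - 1) / 2 = p := by omega
  rw [h1, h2, hm1]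
  rw [Finset.sum_range_succ' (fun k => bern (m + 2) (2 * (p + 1) - k) k),
      Finset.sum_range_succ' (fun k => bern (m + 1) (2 * (p + 1) - k) k)]
  have key : ∀ i, bern (m + 2) (2 * (p + 1) - (i + 1)) (i + 1)
      = bern (m + 2) (2 * (p + 1) - 1 - i) i + bern (m + 1) (2 * (p + 1) - (i + 1)) (i + 1) := by
    intro i
    have h3 : 2 * (p + 1) - 1 - i = 2 * (p + 1) - (i + 1) := by omega
    rw [h3, bern_succ_col]
  simp only [key, Finset.sum_add_distrib, bern_zero_col]
  omega
end

section
/- For every n ≥ 0, ∑_{k=0}^{⌊n/2⌋} ∑_{q=0}^{k} binom(n−k, q) = F_{n+3} − 2^{⌊(n+1)/2⌋}. -/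
open Finset

lemma hockey (t q : ℕ) : ∑ m ∈ Finset.Ico q t, Nat.choose m q = t.choose (q + 1) := by
  cases t with
  | zero => simp [Nat.choose_eq_zero_of_lt]
  | succ s => rw [Finset.Ico_add_one_right_eq_Icc, Nat.sum_Icc_choose]

lemma inner_eq (n h q : ℕ) (hq : q ≤ h) (hh : 2 * h ≤ n) :
    (∑ k ∈ Finset.Ico q (h + 1), ((n - k).choose q : ℤ)) =
      ((n + 1 - q).choose (q + 1) : ℤ) - ((n - h).choose (q + 1) : ℤ) := by
  have hrei : (∑ k ∈ Finset.Ico q (h + 1), ((n - k).choose q : ℤ)) =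
      ∑ m ∈ Finset.Ico (n - h) (n + 1 - q), ((m).choose q : ℤ) := by
    refine Finset.sum_nbij' (fun k => n - k) (fun m => n - m) ?_ ?_ ?_ ?_ ?_
    · simp only [Finset.mem_Ico]; intro a ha; omega
    · simp only [Finset.mem_Ico]; intro a ha; omega
    · simp only [Finset.mem_Ico]; intro a ha; omega
    · simp only [Finset.mem_Ico]; intro a ha; omega
    · intro a _; rfl
  rw [hrei]
  have h1 : ∑ m ∈ Finset.Ico q (n - h), Nat.choose m q
      + ∑ m ∈ Finset.Ico (n - h) (n + 1 - q), Nat.choose m q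
      = ∑ m ∈ Finset.Ico q (n + 1 - q), Nat.choose m q :=
    Finset.sum_Ico_consecutive _ (by omega) (by omega)
  rw [hockey, hockey] at h1
  have h2 := congrArg (fun x : ℕ => (x : ℤ)) h1
  push_cast at h2 ⊢
  linarith

lemma second_sum (n h : ℕ) (hn : n ≤ 2 * h + 1) (hh : 2 * h ≤ n) :
    ∑ q ∈ Finset.range (h + 1), (n - h).choose (q + 1) + 1 = 2 ^ (n - h) := by
  have htr : ∑ q ∈ Finset.range (h + 1), (n - h).choose (q + 1)
      = ∑ q ∈ Finset.range (n - h), (n - h).choose (q + 1) := by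
    rw [← Finset.sum_range_add_sum_Ico _ (show n - h ≤ h + 1 by omega)]
    have hz : ∀ q ∈ Finset.Ico (n - h) (h + 1), (n - h).choose (q + 1) = 0 := by
      intro q hq
      simp only [Finset.mem_Ico] at hq
      exact Nat.choose_eq_zero_of_lt (by omega)
    rw [Finset.sum_congr rfl hz]
    simp
  rw [htr]
  have := Nat.sum_range_choose (n - h)
  rw [Finset.sum_range_succ'] at this
  simpa [add_comm] using this

lemma first_sum (n h : ℕ) (hn : n ≤ 2 * h + 1) (hh : 2 * h ≤ n) :
    ∑ q ∈ Finset.range (h + 1), (n + 1 - q).choose (q + 1) + 1 = Nat.fib (n + 3) := by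
  have hfib : Nat.fib (n + 3) = ∑ j ∈ Finset.range (n + 3), (n + 2 - j).choose j := by
    rw [show n + 3 = (n + 2) + 1 from rfl, Nat.fib_succ_eq_sum_choose,
      Finset.Nat.sum_antidiagonal_eq_sum_range_succ_mk]
    rw [← Finset.sum_range_reflect (fun j => (n + 2 - j).choose j) (n + 2 + 1)]
    refine Finset.sum_congr rfl fun k hk => ?_
    simp only [Finset.mem_range] at hk
    congr 1 <;> omega
  rw [Finset.sum_range_succ'] at hfib
  simp only [Nat.sub_zero, Nat.choose_zero_right] at hfib
  have htrunc : ∑ i ∈ Finset.range (n + 2), (n + 2 - (i + 1)).choose (i + 1)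
      = ∑ i ∈ Finset.range (h + 1), (n + 2 - (i + 1)).choose (i + 1) := by
    rw [← Finset.sum_range_add_sum_Ico _ (show h + 1 ≤ n + 2 by omega)]
    have hz : ∀ i ∈ Finset.Ico (h + 1) (n + 2), (n + 2 - (i + 1)).choose (i + 1) = 0 := by
      intro i hi
      simp only [Finset.mem_Ico] at hi
      exact Nat.choose_eq_zero_of_lt (by omega)
    rw [Finset.sum_congr rfl hz]
    simp
  rw [htrunc] at hfib
  have hcg : ∑ q ∈ Finset.range (h + 1), (n + 1 - q).choose (q + 1)
      = ∑ i ∈ Finset.range (h + 1), (n + 2 - (i + 1)).choose (i + 1) := by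
    refine Finset.sum_congr rfl fun i hi => ?_
    have : n + 2 - (i + 1) = n + 1 - i := by omega
    rw [this]
  omega

theorem theoremT2 (n : ℕ) :
    (∑ k ∈ Finset.range (n / 2 + 1), ∑ q ∈ Finset.range (k + 1),
        ((n - k).choose q : ℤ)) =
      (Nat.fib (n + 3) : ℤ) - 2 ^ ((n + 1) / 2) := by
  set h := n / 2 with hh
  have h2h : 2 * h ≤ n := by omega
  have hn2 : n ≤ 2 * h + 1 := by omega
  have hswap : (∑ k ∈ Finset.range (h + 1), ∑ q ∈ Finset.range (k + 1),
        ((n - k).choose q : ℤ)) =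
      ∑ q ∈ Finset.Ico 0 (h + 1), ∑ k ∈ Finset.Ico q (h + 1), ((n - k).choose q : ℤ) := by
    simp only [Finset.range_eq_Ico]
    exact (Finset.sum_Ico_Ico_comm 0 (h + 1) fun q k => ((n - k).choose q : ℤ)).symm
  rw [hswap]
  have hstep : ∀ q ∈ Finset.Ico 0 (h + 1),
      (∑ k ∈ Finset.Ico q (h + 1), ((n - k).choose q : ℤ)) =
        ((n + 1 - q).choose (q + 1) : ℤ) - ((n - h).choose (q + 1) : ℤ) := by
    intro q hq
    simp only [Finset.mem_Ico] at hq
    exact inner_eq n h q (by omega) h2h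
  rw [Finset.sum_congr rfl hstep, Finset.sum_sub_distrib]
  have e1 := congrArg (fun x : ℕ => (x : ℤ)) (first_sum n h hn2 h2h)
  have e2 := congrArg (fun x : ℕ => (x : ℤ)) (second_sum n h hn2 h2h)
  push_cast at e1 e2
  rw [← Finset.range_eq_Ico] at *
  have hnh : n - h = (n + 1) / 2 := by omega
  simp only [hnh] at e2 ⊢
  linarith
end

section
/- Define S̄(n) = B^[3](n,n) − ∑_{k=1}^{⌊n/2⌋} B^[3](n−k, n−2k), as an integer. Then for every n ≥ 1, S̄(n) − 2·S̄(n−1) = F_n. -/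
/-- S̄_n for the path following direction (2,-1) from (n,n) in the third-order triangle. -/
def Sbar3 (n : ℕ) : ℤ :=
  (bern 3 n n : ℤ) - ∑ k ∈ Finset.Icc 1 (n / 2), (bern 3 (n - k) (n - 2 * k) : ℤ)

lemma bern2_def (n k : ℕ) : bern 2 n k = ∑ q ∈ Finset.range (k+1), n.choose q := rfl
lemma bern3_def (n k : ℕ) : bern 3 n k = ∑ q ∈ Finset.range (k+1), bern 2 n q := rfl

lemma bern2_succ (n k : ℕ) : bern 2 n (k+1) = bern 2 n k + n.choose (k+1) := by
  rw [bern2_def, bern2_def, Finset.sum_range_succ]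
lemma bern3_succ (n k : ℕ) : bern 3 n (k+1) = bern 3 n k + bern 2 n (k+1) := by
  rw [bern3_def, bern3_def, Finset.sum_range_succ]
lemma bern2_zero (n : ℕ) : bern 2 n 0 = 1 := by simp [bern2_def]
lemma bern3_zero (n : ℕ) : bern 3 n 0 = 1 := by simp [bern3_def, bern2_zero]

lemma bern2_pascal (n k : ℕ) : bern 2 (n+1) (k+1) = bern 2 n (k+1) + bern 2 n k := by
  induction k with
  | zero =>
      have h1 := bern2_succ (n+1) 0
      have h2 := bern2_succ n 0
      have h3 := bern2_zero (n+1)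
      have h4 := bern2_zero n
      norm_num [Nat.choose_one_right] at h1 h2 ⊢
      omega
  | succ k ih =>
      rw [bern2_succ (n+1) (k+1), ih, Nat.choose_succ_succ, bern2_succ n (k+1), bern2_succ n k]
      simp only [Nat.succ_eq_add_one]
      omega

lemma bern3_pascal (n k : ℕ) : bern 3 (n+1) (k+1) = bern 3 n (k+1) + bern 3 n k := by
  induction k with
  | zero =>
      have h1 := bern3_succ (n+1) 0
      have h2 := bern3_succ n 0
      have h3 := bern3_zero (n+1)
      have h4 := bern3_zero n
      have h5 := bern2_pascal n 0
      have h6 := bern2_zero n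
      omega
  | succ k ih =>
      have h1 := bern3_succ (n+1) (k+1)
      have h2 := bern2_pascal n (k+1)
      have h3 := bern3_succ n (k+1)
      have h4 := bern3_succ n k
      omega

lemma bern2_top (n : ℕ) : bern 2 n n = 2^n := by
  rw [bern2_def]; exact Nat.sum_range_choose n

lemma bern2_top' (n : ℕ) : bern 2 n (n+1) = 2^n := by
  rw [bern2_succ, bern2_top, Nat.choose_succ_self, Nat.add_zero]

lemma b_rec (n : ℕ) : bern 3 (n+1) (n+1) = 2 * bern 3 n n + 2^n := by
  have h1 : bern 3 (n+1) (n+1) = ∑ i ∈ Finset.range (n+1), bern 2 (n+1) (i+1) + bern 2 (n+1) 0 := by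
    rw [bern3_def, Finset.sum_range_succ']
  have h2 : ∑ i ∈ Finset.range (n+1), bern 2 (n+1) (i+1)
      = ∑ i ∈ Finset.range (n+1), bern 2 n (i+1) + ∑ i ∈ Finset.range (n+1), bern 2 n i := by
    rw [← Finset.sum_add_distrib]
    exact Finset.sum_congr rfl fun i _ => bern2_pascal n i
  have h3 : bern 3 n (n+1) = ∑ i ∈ Finset.range (n+1), bern 2 n (i+1) + bern 2 n 0 := by
    rw [bern3_def, Finset.sum_range_succ']
  have h4 : ∑ i ∈ Finset.range (n+1), bern 2 n i = bern 3 n n := (bern3_def n n).symm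
  have h5 := bern3_succ n n
  have h6 := bern2_top' n
  have h7 := bern2_zero n
  have h8 := bern2_zero (n+1)
  omega

lemma b_closed (n : ℕ) : 2 * bern 3 n n = (n+2) * 2^n := by
  induction n with
  | zero => simp [bern3_zero]
  | succ n ih =>
      rw [b_rec]
      have : 2 * (2 * bern 3 n n + 2 ^ n) = 2 * ((n+2) * 2^n) + 2 * 2^n := by
        rw [← ih]; ring
      rw [this, pow_succ]; ring

def Qf (n : ℕ) : ℕ := ∑ k ∈ Finset.range (n/2+1), bern 3 (n-k) (n-2*k)

lemma Qf_eq (n m : ℕ) (h : n/2 + 1 = m) :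
    Qf n = ∑ k ∈ Finset.range m, bern 3 (n-k) (n-2*k) := by rw [Qf, h]

lemma Q_even (m : ℕ) : Qf (2*m+2) + bern 3 (2*m+1) (2*m+1)
    = Qf (2*m+1) + Qf (2*m) + bern 3 (2*m+2) (2*m+2) := by
  have hQ2 : Qf (2*m+2) = ∑ i ∈ Finset.range m,
      (bern 3 (2*m-i) (2*m-2*i) + bern 3 (2*m-i) (2*m-2*i-1))
      + bern 3 (2*m+2) (2*m+2) + 1 := by
    rw [Qf_eq (2*m+2) (m+2) (by omega), Finset.sum_range_succ, Finset.sum_range_succ']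
    have e1 : 2*m+2-(m+1) = m+1 := by omega
    have e2 : 2*m+2-2*(m+1) = 0 := by omega
    rw [e1, e2, bern3_zero]
    have hterm : ∀ i ∈ Finset.range m, bern 3 (2*m+2-(i+1)) (2*m+2-2*(i+1))
        = bern 3 (2*m-i) (2*m-2*i) + bern 3 (2*m-i) (2*m-2*i-1) := by
      intro i hi
      simp only [Finset.mem_range] at hi
      have e3 : 2*m+2-(i+1) = (2*m-i)+1 := by omega
      have e4 : 2*m+2-2*(i+1) = (2*m-2*i-1)+1 := by omega
      have e5 : (2*m-2*i-1)+1 = 2*m-2*i := by omega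
      rw [e3, e4, bern3_pascal, e5]
    rw [Finset.sum_congr rfl hterm]
    norm_num
  have hQ0 : Qf (2*m) = ∑ i ∈ Finset.range m, bern 3 (2*m-i) (2*m-2*i) + 1 := by
    rw [Qf_eq (2*m) (m+1) (by omega), Finset.sum_range_succ]
    have e1 : 2*m-m = m := by omega
    have e2 : 2*m-2*m = 0 := by omega
    rw [e1, e2, bern3_zero]
  have hQ1 : Qf (2*m+1) = ∑ i ∈ Finset.range m, bern 3 (2*m-i) (2*m-2*i-1)
      + bern 3 (2*m+1) (2*m+1) := by
    rw [Qf_eq (2*m+1) (m+1) (by omega), Finset.sum_range_succ']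
    have hterm : ∀ i ∈ Finset.range m, bern 3 (2*m+1-(i+1)) (2*m+1-2*(i+1))
        = bern 3 (2*m-i) (2*m-2*i-1) := by
      intro i hi
      simp only [Finset.mem_range] at hi
      have e3 : 2*m+1-(i+1) = 2*m-i := by omega
      have e4 : 2*m+1-2*(i+1) = 2*m-2*i-1 := by omega
      rw [e3, e4]
    rw [Finset.sum_congr rfl hterm]
    norm_num
  rw [hQ2, hQ0, hQ1, Finset.sum_add_distrib]
  ring

lemma Q_odd (m : ℕ) : Qf (2*m+3) + bern 3 (2*m+2) (2*m+2)
    = Qf (2*m+2) + Qf (2*m+1) + bern 3 (2*m+3) (2*m+3) := by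
  have hQ3 : Qf (2*m+3) = ∑ i ∈ Finset.range (m+1),
      (bern 3 (2*m+1-i) (2*m+1-2*i) + bern 3 (2*m+1-i) (2*m-2*i))
      + bern 3 (2*m+3) (2*m+3) := by
    rw [Qf_eq (2*m+3) (m+2) (by omega), Finset.sum_range_succ']
    have hterm : ∀ i ∈ Finset.range (m+1), bern 3 (2*m+3-(i+1)) (2*m+3-2*(i+1))
        = bern 3 (2*m+1-i) (2*m+1-2*i) + bern 3 (2*m+1-i) (2*m-2*i) := by
      intro i hi
      simp only [Finset.mem_range] at hi
      have e3 : 2*m+3-(i+1) = (2*m+1-i)+1 := by omega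
      have e4 : 2*m+3-2*(i+1) = (2*m-2*i)+1 := by omega
      have e5 : (2*m-2*i)+1 = 2*m+1-2*i := by omega
      rw [e3, e4, bern3_pascal, e5]
    rw [Finset.sum_congr rfl hterm]
    norm_num
  have hQ1 : Qf (2*m+1) = ∑ i ∈ Finset.range (m+1), bern 3 (2*m+1-i) (2*m+1-2*i) := by
    rw [Qf_eq (2*m+1) (m+1) (by omega)]
  have hQ2 : Qf (2*m+2) = ∑ i ∈ Finset.range (m+1), bern 3 (2*m+1-i) (2*m-2*i)
      + bern 3 (2*m+2) (2*m+2) := by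
    rw [Qf_eq (2*m+2) (m+2) (by omega), Finset.sum_range_succ']
    have hterm : ∀ i ∈ Finset.range (m+1), bern 3 (2*m+2-(i+1)) (2*m+2-2*(i+1))
        = bern 3 (2*m+1-i) (2*m-2*i) := by
      intro i hi
      simp only [Finset.mem_range] at hi
      have e3 : 2*m+2-(i+1) = 2*m+1-i := by omega
      have e4 : 2*m+2-2*(i+1) = 2*m-2*i := by omega
      rw [e3, e4]
    rw [Finset.sum_congr rfl hterm]
    norm_num
  rw [hQ3, hQ1, hQ2, Finset.sum_add_distrib]
  ring

lemma Q_rec (n : ℕ) : Qf (n+2) + bern 3 (n+1) (n+1)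
    = Qf (n+1) + Qf n + bern 3 (n+2) (n+2) := by
  rcases Nat.even_or_odd n with ⟨m, hm⟩ | ⟨m, hm⟩
  · have : n = 2*m := by omega
    subst this
    exact Q_even m
  · subst hm
    have h := Q_odd m
    convert h using 3

lemma Q_closed (n : ℕ) : (Qf n : ℤ) = ((n:ℤ) - 1) * 2^n + Nat.fib (n+3) := by
  induction n using Nat.twoStepInduction with
  | zero =>
      have h : Qf 0 = 1 := rfl
      rw [h]
      norm_num [Nat.fib]
  | one =>
      have h : Qf 1 = 3 := rfl
      rw [h]
      norm_num [Nat.fib]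
  | more n ih1 ih2 =>
      have hrec := Q_rec n
      have hrecz : (Qf (n+2):ℤ) + (bern 3 (n+1) (n+1) : ℤ)
          = (Qf (n+1):ℤ) + (Qf n:ℤ) + (bern 3 (n+2) (n+2):ℤ) := by exact_mod_cast hrec
      have hb2 : 2 * (bern 3 (n+2) (n+2) : ℤ) = ((n:ℤ)+4) * 2^(n+2) := by
        have h := congrArg (Nat.cast : ℕ → ℤ) (b_closed (n+2))
        push_cast at h
        linarith [h]
      have hb1 : 2 * (bern 3 (n+1) (n+1) : ℤ) = ((n:ℤ)+3) * 2^(n+1) := by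
        have h := congrArg (Nat.cast : ℕ → ℤ) (b_closed (n+1))
        push_cast at h
        linarith [h]
      have hf : (Nat.fib (n+5) : ℤ) = (Nat.fib (n+4) : ℤ) + (Nat.fib (n+3) : ℤ) := by
        have h : Nat.fib (n+5) = Nat.fib (n+4) + Nat.fib (n+3) := by
          have h2 := Nat.fib_add_two (n := n+3)
          rw [show n+3+2 = n+5 from by omega, show n+3+1 = n+4 from by omega] at h2
          omega
        exact_mod_cast h
      push_cast at ih2 ⊢
      refine mul_left_cancel₀ (a := (2:ℤ)) two_ne_zero ?_
      have e5 : n+2+3 = n+5 := by omega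
      have e4 : n+1+3 = n+4 := by omega
      rw [e5]
      rw [e4] at ih2
      linear_combination 2*hrecz + 2*ih2 + 2*ih1 + hb2 - hb1 - 2*hf

lemma Sbar3_eq (n : ℕ) : Sbar3 n = 2 * (bern 3 n n : ℤ) - (Qf n : ℤ) := by
  have h : Finset.range (n/2+1) = insert 0 (Finset.Icc 1 (n/2)) := by
    ext x; simp; omega
  have hQ : (Qf n : ℤ) = (bern 3 n n : ℤ)
      + ∑ k ∈ Finset.Icc 1 (n/2), (bern 3 (n-k) (n-2*k) : ℤ) := by
    rw [Qf, h, Finset.sum_insert (by simp)]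
    push_cast
    norm_num
  rw [Sbar3, hQ]
  ring

lemma Sbar3_closed (n : ℕ) : Sbar3 n = 3 * 2^n - (Nat.fib (n+3) : ℤ) := by
  rw [Sbar3_eq, Q_closed]
  have h := congrArg (Nat.cast : ℕ → ℤ) (b_closed n)
  push_cast at h
  linear_combination h

theorem Sbar3_recurrence (n : ℕ) (hn : 1 ≤ n) :
    Sbar3 n - 2 * Sbar3 (n - 1) = (Nat.fib n : ℤ) := by
  obtain ⟨m, rfl⟩ : ∃ m, n = m + 1 := ⟨n - 1, by omega⟩
  rw [show m + 1 - 1 = m from by omega, Sbar3_closed, Sbar3_closed]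
  have h1 : Nat.fib (m+4) = Nat.fib (m+2) + Nat.fib (m+3) := Nat.fib_add_two (n := m+2)
  have h2 : Nat.fib (m+3) = Nat.fib (m+1) + Nat.fib (m+2) := Nat.fib_add_two (n := m+1)
  have h1z : (Nat.fib (m+4) : ℤ) = Nat.fib (m+2) + Nat.fib (m+3) := by exact_mod_cast h1
  have h2z : (Nat.fib (m+3) : ℤ) = Nat.fib (m+1) + Nat.fib (m+2) := by exact_mod_cast h2
  rw [show m+1+3 = m+4 from by omega]
  linear_combination h2z - h1z
end

section
/- For every n ≥ 0, with p = ⌊(n+1)/2⌋, one has 8 · ∑_{k=0}^{⌊n/2⌋} ∑_{q=0}^{k} ∑_{r=0}^{q} ∑_{s=0}^{r} binom(n−k, s) = 8·F_{n+7} − 2^p·(p² + 17p + 80 + (−1)^n·(2p + 16)), as an identity of integers. -/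
open Finset

private def uu (m r : ℕ) : ℤ := ∑ s ∈ range (r+1), (m.choose s : ℤ)
private def hh (m q : ℕ) : ℤ := ∑ r ∈ range (q+1), uu m r
private def gg (m k : ℕ) : ℤ := ∑ q ∈ range (k+1), hh m q
private def TT (n : ℕ) : ℤ := ∑ k ∈ range (n/2+1), gg (n-k) k

private lemma uu0 (m : ℕ) : uu m 0 = 1 := by simp [uu]
private lemma hh0 (m : ℕ) : hh m 0 = 1 := by simp [hh, uu0]
private lemma gg0 (m : ℕ) : gg m 0 = 1 := by simp [gg, hh0]

private lemma uu_succ (m r : ℕ) : uu (m+1) (r+1) = uu m (r+1) + uu m r := by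
  simp only [uu]
  rw [Finset.sum_range_succ' (fun s => (((m+1).choose s : ℕ) : ℤ)) (r+1),
      Finset.sum_range_succ' (fun s => ((m.choose s : ℕ) : ℤ)) (r+1)]
  simp only [Nat.choose_succ_succ, Nat.cast_add, Finset.sum_add_distrib,
    Nat.choose_zero_right, Nat.cast_one]
  ring

private lemma hh_succ (m q : ℕ) : hh (m+1) (q+1) = hh m (q+1) + hh m q := by
  simp only [hh]
  rw [Finset.sum_range_succ' (fun r => uu (m+1) r) (q+1),
      Finset.sum_range_succ' (fun r => uu m r) (q+1)]
  simp only [uu_succ, Finset.sum_add_distrib, uu0]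
  ring

private lemma gg_succ (m k : ℕ) : gg (m+1) (k+1) = gg m (k+1) + gg m k := by
  simp only [gg]
  rw [Finset.sum_range_succ' (fun q => hh (m+1) q) (k+1),
      Finset.sum_range_succ' (fun q => hh m q) (k+1)]
  simp only [hh_succ, Finset.sum_add_distrib, hh0]
  ring

private lemma TT_aux (n : ℕ) :
    TT (n+2) = (∑ k ∈ range ((n+2)/2+1), gg (n+1-k) k) + TT n := by
  have h1 : TT (n+2) = ∑ k ∈ range ((n+2)/2+1), gg (n+2-k) k := rfl
  rw [h1, Finset.sum_range_succ' (fun k => gg (n+2-k) k) ((n+2)/2),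
      Finset.sum_range_succ' (fun k => gg (n+1-k) k) ((n+2)/2)]
  have h2 : ∀ i ∈ range ((n+2)/2), gg (n+2-(i+1)) (i+1)
      = gg (n+1-(i+1)) (i+1) + gg (n-i) i := by
    intro i hi
    rw [Finset.mem_range] at hi
    have hle : i ≤ n := by omega
    have e1 : n+2-(i+1) = (n-i)+1 := by omega
    have e2 : n+1-(i+1) = n-i := by omega
    rw [e1, e2, gg_succ]
  rw [Finset.sum_congr rfl h2, Finset.sum_add_distrib]
  have h3 : (∑ i ∈ range ((n+2)/2), gg (n-i) i) = TT n := by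
    simp only [TT]
    have e : (n+2)/2 = n/2+1 := by omega
    rw [e]
  rw [h3]
  simp only [Nat.sub_zero, gg0]
  ring

private lemma TT_odd (t : ℕ) : TT (2*t+3) = TT (2*t+2) + TT (2*t+1) := by
  have := TT_aux (2*t+1)
  have e1 : 2*t+1+2 = 2*t+3 := by ring
  have e2 : (2*t+1+2)/2+1 = (2*t+2)/2+1 := by omega
  rw [e1, e2] at this
  rw [this]
  have h3 : (∑ k ∈ range ((2*t+2)/2+1), gg (2*t+1+1-k) k) = TT (2*t+2) := by
    simp only [TT]
  rw [h3]

private lemma TT_even (t : ℕ) :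
    TT (2*t+2) = TT (2*t+1) + TT (2*t) + gg t (t+1) := by
  have := TT_aux (2*t)
  have e2 : (2*t+2)/2+1 = (t+1)+1 := by omega
  rw [e2] at this
  rw [this, Finset.sum_range_succ]
  have h3 : (∑ k ∈ range (t+1), gg (2*t+1-k) k) = TT (2*t+1) := by
    simp only [TT]
    have : (2*t+1)/2+1 = t+1 := by omega
    rw [this]
  have h4 : 2*t+1-(t+1) = t := by omega
  rw [h3, h4]
  ring

private lemma uu_top (t r : ℕ) (h : t ≤ r) : uu t r = 2^t := by
  simp only [uu]
  rw [← Finset.sum_subset (Finset.range_subset_range.2 (by omega : t+1 ≤ r+1))]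
  · rw [← Nat.cast_sum]
    rw [Nat.sum_range_choose]
    push_cast
    ring
  · intro x _ hx
    rw [Finset.mem_range, not_lt] at hx
    rw [Nat.choose_eq_zero_of_lt (by omega)]
    simp

private lemma hh_top1 (t : ℕ) : 2 * hh t (t+1) = 2^t * (t+4) := by
  induction t with
  | zero => simp [hh, uu, Finset.sum_range_succ]
  | succ t ih =>
    have h1 : hh (t+1) (t+2) = hh t (t+2) + hh t (t+1) := hh_succ t (t+1)
    have h2 : hh t (t+2) = hh t (t+1) + uu t (t+2) := by
      simp only [hh]; rw [Finset.sum_range_succ]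
    have h3 : uu t (t+2) = 2^t := uu_top t (t+2) (by omega)
    rw [h1, h2, h3]
    push_cast
    linear_combination 2 * ih

private lemma gg_top1 (t : ℕ) :
    8 * gg t (t+1) = 2^t * ((t:ℤ)^2 + 11*t + 24) := by
  induction t with
  | zero => norm_num [gg, hh, uu, Finset.sum_range_succ]
  | succ t ih =>
    have h1 : gg (t+1) (t+2) = gg t (t+2) + gg t (t+1) := gg_succ t (t+1)
    have h2 : gg t (t+2) = gg t (t+1) + hh t (t+2) := by
      simp only [gg]; rw [Finset.sum_range_succ]
    have h3 : hh t (t+2) = hh t (t+1) + uu t (t+2) := by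
      simp only [hh]; rw [Finset.sum_range_succ]
    have h4 : uu t (t+2) = 2^t := uu_top t (t+2) (by omega)
    have h5 := hh_top1 t
    rw [h1, h2, h3, h4]
    push_cast
    linear_combination 2 * ih + 4 * h5

theorem theoremT4 (n : ℕ) :
    8 * (∑ k ∈ Finset.range (n / 2 + 1), ∑ q ∈ Finset.range (k + 1),
          ∑ r ∈ Finset.range (q + 1), ∑ s ∈ Finset.range (r + 1),
            ((n - k).choose s : ℤ)) =
      8 * (Nat.fib (n + 7) : ℤ) -
        2 ^ ((n + 1) / 2) *
          (((n + 1) / 2 : ℕ) ^ 2 + 17 * ((n + 1) / 2 : ℕ) + 80 +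
            (-1) ^ n * (2 * ((n + 1) / 2 : ℕ) + 16)) := by
  show 8 * TT n = _
  induction n using Nat.twoStepInduction with
  | zero =>
    have : TT 0 = 1 := by simp [TT, gg, hh, uu]
    rw [this]
    norm_num
  | one =>
    have : TT 1 = 1 := by simp [TT, gg, hh, uu]
    rw [this]
    norm_num
  | more n ih1 ih2 =>
    rcases Nat.even_or_odd n with ⟨t, rfl⟩ | ⟨t, rfl⟩
    · -- n = t + t = 2*t
      have hn : t + t = 2*t := by ring
      rw [hn] at ih1 ih2 ⊢
      have e1 : 2*t+2 = 2*(t)+2 := rfl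
      have hT := TT_even t
      have hg := gg_top1 t
      have hfib : (Nat.fib (2*t+2+7) : ℤ) = Nat.fib (2*t+7) + Nat.fib (2*t+1+7) := by
        have := Nat.fib_add_two (n := 2*t+7)
        have e : 2*t+7+2 = 2*t+2+7 := by ring
        rw [e] at this
        have e2 : 2*t+7+1 = 2*t+1+7 := by ring
        rw [e2] at this
        exact_mod_cast this
      have d1 : (2*t+1)/2 = t := by omega
      have d2 : (2*t+1+1)/2 = t+1 := by omega
      have d3 : (2*t+2+1)/2 = t+1 := by omega
      rw [d1] at ih1
      rw [d2] at ih2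
      rw [d3]
      have p1 : (-1 : ℤ)^(2*t) = 1 := by
        rw [pow_mul]; norm_num
      have p2 : (-1 : ℤ)^(2*t+1) = -1 := by
        rw [pow_add, pow_mul]; norm_num
      have p3 : (-1 : ℤ)^(2*t+2) = 1 := by
        rw [pow_add, pow_mul]; norm_num
      rw [p1] at ih1
      rw [p2] at ih2
      rw [p3]
      rw [hT, hfib]
      push_cast
      push_cast at ih1 ih2
      linear_combination ih1 + ih2 + hg
    · -- n = 2*t+1
      have hT := TT_odd t
      have hfib : (Nat.fib (2*t+1+2+7) : ℤ) = Nat.fib (2*t+1+7) + Nat.fib (2*t+1+1+7) := by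
        have := Nat.fib_add_two (n := 2*t+1+7)
        have e : 2*t+1+7+2 = 2*t+1+2+7 := by ring
        rw [e] at this
        have e2 : 2*t+1+7+1 = 2*t+1+1+7 := by ring
        rw [e2] at this
        exact_mod_cast this
      have d1 : (2*t+1+1)/2 = t+1 := by omega
      have d2 : (2*t+1+1+1)/2 = t+1 := by omega
      have d3 : (2*t+1+2+1)/2 = t+2 := by omega
      rw [d1] at ih1
      rw [d2] at ih2
      rw [d3]
      have p1 : (-1 : ℤ)^(2*t+1) = -1 := by
        rw [pow_add, pow_mul]; norm_num
      have p2 : (-1 : ℤ)^(2*t+1+1) = 1 := by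
        have e : 2*t+1+1 = 2*(t+1) := by ring
        rw [e, pow_mul]; norm_num
      have p3 : (-1 : ℤ)^(2*t+1+2) = -1 := by
        have e : 2*t+1+2 = 2*(t+1)+1 := by ring
        rw [e, pow_add, pow_mul]; norm_num
      rw [p1] at ih1
      rw [p2] at ih2
      rw [p3]
      have e4 : 2*t+3 = 2*t+1+2 := by ring
      have e5 : 2*t+2 = 2*t+1+1 := by ring
      rw [e4, e5] at hT
      rw [hT, hfib]
      push_cast
      push_cast at ih1 ih2
      linear_combination ih1 + ih2
end

section
/- For every n ≥ 0, with p = ⌊(n+1)/2⌋, one has 48 · ∑_{k=0}^{⌊n/2⌋} ∑_{q=0}^{k} ∑_{r=0}^{q} ∑_{s=0}^{r} ∑_{t=0}^{s} binom(n−k, t) = 48·F_{n+9} − 2^p·(p³ + 30p² + 317p + 1296 + (−1)^n·(3p² + 57p + 288)), as an identity of integers. -/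
open Finset

namespace T5aux

def B1 (m s : ℕ) : ℤ := ∑ t ∈ range (s+1), (m.choose t : ℤ)
def B2 (m r : ℕ) : ℤ := ∑ s ∈ range (r+1), B1 m s
def B3 (m q : ℕ) : ℤ := ∑ r ∈ range (q+1), B2 m r
def J  (m k : ℕ) : ℤ := ∑ q ∈ range (k+1), B3 m q
def S  (n : ℕ) : ℤ := ∑ k ∈ range (n/2+1), J (n-k) k

/-- generic propagation of the Pascal-type step through a partial sum layer -/
lemma layer_step {f : ℕ → ℕ → ℤ}
    (h0 : ∀ m, f (m+1) 0 = f m 0)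
    (h : ∀ m j, f (m+1) (j+1) = f m (j+1) + f m j) (m j : ℕ) :
    (∑ i ∈ range (j+1+1), f (m+1) i) =
      (∑ i ∈ range (j+1+1), f m i) + ∑ i ∈ range (j+1), f m i := by
  rw [Finset.sum_range_succ' (f (m+1)) (j+1), Finset.sum_range_succ' (f m) (j+1),
      Finset.sum_range_succ' (f m) j]
  simp only [h, h0]
  rw [Finset.sum_add_distrib]
  have hs : ∑ x ∈ range (j+1), f m x = ∑ x ∈ range j, f m (x+1) + f m 0 :=
    Finset.sum_range_succ' (f m) j
  rw [hs]
  ring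

lemma B1_zero (m : ℕ) : B1 (m+1) 0 = B1 m 0 := by simp [B1]
lemma B1_step (m j : ℕ) : B1 (m+1) (j+1) = B1 m (j+1) + B1 m j := by
  apply layer_step (f := fun m t => (m.choose t : ℤ)) (by simp)
  intro m j
  push_cast [Nat.choose_succ_succ]
  ring

lemma B2_zero (m : ℕ) : B2 (m+1) 0 = B2 m 0 := by simp [B2, B1_zero]
lemma B2_step (m j : ℕ) : B2 (m+1) (j+1) = B2 m (j+1) + B2 m j :=
  layer_step B1_zero B1_step m j

lemma B3_zero (m : ℕ) : B3 (m+1) 0 = B3 m 0 := by simp [B3, B2_zero]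
lemma B3_step (m j : ℕ) : B3 (m+1) (j+1) = B3 m (j+1) + B3 m j :=
  layer_step B2_zero B2_step m j

lemma J_zero (m : ℕ) : J m 0 = 1 := by simp [J, B3, B2, B1]
lemma J_step (m j : ℕ) : J (m+1) (j+1) = J m (j+1) + J m j :=
  layer_step B3_zero B3_step m j

lemma vB1 (a j : ℕ) : B1 a (a+j) = 2^a := by
  induction j with
  | zero =>
    simp only [B1, Nat.add_zero]
    rw [← Nat.cast_sum]
    rw [Nat.sum_range_choose]
    push_cast; ring
  | succ j ih =>
    have : a + (j+1) = (a+j) + 1 := by ring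
    rw [this, B1, Finset.sum_range_succ, ← B1, ih,
      Nat.choose_eq_zero_of_lt (by omega)]
    simp

lemma vB2 (a : ℕ) : 2 * B2 a (a+3) = 2^a * (a + 8) := by
  induction a with
  | zero => simp [B2, B1, Finset.sum_range_succ]
  | succ a ih =>
    have h1 : B2 (a+1) (a+1+3) = B2 a (a+4) + B2 a (a+3) := B2_step a (a+3)
    have h2 : B2 a (a+4) = B2 a (a+3) + B1 a (a+4) := by
      rw [B2, Finset.sum_range_succ, ← B2]
    rw [h1, h2, vB1 a 4]
    push_cast
    linear_combination 2 * ih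

lemma vB3 (a : ℕ) : 8 * B3 a (a+2) = 2^a * ((a:ℤ)^2 + 15*a + 48) := by
  induction a with
  | zero => simp [B3, B2, B1, Finset.sum_range_succ]
  | succ a ih =>
    have h1 : B3 (a+1) (a+1+2) = B3 a (a+3) + B3 a (a+2) := B3_step a (a+2)
    have h2 : B3 a (a+3) = B3 a (a+2) + B2 a (a+3) := by
      rw [B3, Finset.sum_range_succ, ← B3]
    have h3 := vB2 a
    rw [h1, h2]
    push_cast
    linear_combination 2 * ih + 4 * h3

lemma vJ (a : ℕ) : 48 * J a (a+1) = 2^a * ((a:ℤ)^3 + 21*a^2 + 122*a + 192) := by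
  induction a with
  | zero => simp [J, B3, B2, B1, Finset.sum_range_succ]
  | succ a ih =>
    have h1 : J (a+1) (a+1+1) = J a (a+2) + J a (a+1) := J_step a (a+1)
    have h2 : J a (a+2) = J a (a+1) + B3 a (a+2) := by
      rw [J, Finset.sum_range_succ, ← J]
    have h3 := vB3 a
    rw [h1, h2]
    push_cast
    linear_combination 2 * ih + 6 * h3

lemma S_even (a : ℕ) : S (2*a+2) = S (2*a+1) + S (2*a) + J a (a+1) := by
  have hd2 : (2*a+2)/2 = a+1 := by omega
  have hd1 : (2*a+1)/2 = a := by omega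
  have hd0 : (2*a)/2 = a := by omega
  rw [S, S, S, hd2, hd1, hd0]
  rw [Finset.sum_range_succ' (fun k => J (2*a+2-k) k) (a+1)]
  have key : ∀ k ∈ range (a+1),
      J (2*a+2-(k+1)) (k+1) = J (2*a+1-(k+1)) (k+1) + J (2*a-k) k := by
    intro k hk
    simp only [Finset.mem_range] at hk
    have e1 : 2*a+2-(k+1) = (2*a-k) + 1 := by omega
    have e2 : 2*a+1-(k+1) = 2*a-k := by omega
    rw [e1, e2, J_step]
  rw [Finset.sum_congr rfl key, Finset.sum_add_distrib]
  have shift : ∑ k ∈ range (a+1), J (2*a+1-(k+1)) (k+1)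
      = (∑ k ∈ range (a+1), J (2*a+1-k) k) + J (2*a+1-(a+1)) (a+1)
        - J (2*a+1-0) 0 := by
    have := Finset.sum_range_succ' (fun k => J (2*a+1-k) k) (a+1)
    rw [Finset.sum_range_succ (fun k => J (2*a+1-k) k) (a+1)] at this
    linarith [this]
  rw [shift]
  have e3 : 2*a+1-(a+1) = a := by omega
  rw [e3]
  simp only [Nat.sub_zero, J_zero]
  ring

lemma S_odd (a : ℕ) : S (2*a+3) = S (2*a+2) + S (2*a+1) := by
  have hd3 : (2*a+3)/2 = a+1 := by omega
  have hd2 : (2*a+2)/2 = a+1 := by omega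
  have hd1 : (2*a+1)/2 = a := by omega
  rw [S, S, S, hd3, hd2, hd1]
  rw [Finset.sum_range_succ' (fun k => J (2*a+3-k) k) (a+1)]
  have key : ∀ k ∈ range (a+1),
      J (2*a+3-(k+1)) (k+1) = J (2*a+2-(k+1)) (k+1) + J (2*a+1-k) k := by
    intro k hk
    simp only [Finset.mem_range] at hk
    have e1 : 2*a+3-(k+1) = (2*a+1-k) + 1 := by omega
    have e2 : 2*a+2-(k+1) = 2*a+1-k := by omega
    rw [e1, e2, J_step]
  rw [Finset.sum_congr rfl key, Finset.sum_add_distrib]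
  have shift : ∑ k ∈ range (a+1), J (2*a+2-(k+1)) (k+1)
      = (∑ k ∈ range (a+2), J (2*a+2-k) k) - J (2*a+2-0) 0 := by
    have := Finset.sum_range_succ' (fun k => J (2*a+2-k) k) (a+1)
    linarith [this]
  rw [shift]
  simp only [Nat.sub_zero, J_zero]
  ring

def Pe (a : ℕ) : Prop :=
  48 * S (2*a) = 48 * (Nat.fib (2*a+9) : ℤ)
    - 2^a * ((a:ℤ)^3 + 30*a^2 + 317*a + 1296 + (3*(a:ℤ)^2 + 57*a + 288))

def Po (a : ℕ) : Prop :=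
  48 * S (2*a+1) = 48 * (Nat.fib (2*a+10) : ℤ)
    - 2^(a+1) * (((a:ℤ)+1)^3 + 30*((a:ℤ)+1)^2 + 317*((a:ℤ)+1) + 1296
        - (3*((a:ℤ)+1)^2 + 57*((a:ℤ)+1) + 288))

lemma fibcast (n : ℕ) : (Nat.fib (n+2) : ℤ) = Nat.fib (n+1) + Nat.fib n := by
  rw [Nat.fib_add_two]; push_cast; ring

lemma main (a : ℕ) : Pe a ∧ Po a := by
  induction a with
  | zero =>
    constructor
    · show 48 * S 0 = _
      norm_num [S, J, B3, B2, B1]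
    · show 48 * S 1 = _
      norm_num [S, J, B3, B2, B1, Finset.sum_range_succ]
  | succ a ih =>
    obtain ⟨he, ho⟩ := ih
    rw [Pe] at he
    rw [Po] at ho
    have hSe := S_even a
    have hJ := vJ a
    have hf1 : (Nat.fib (2*a+11) : ℤ) = Nat.fib (2*a+10) + Nat.fib (2*a+9) := fibcast (2*a+9)
    have hf2 : (Nat.fib (2*a+12) : ℤ) = Nat.fib (2*a+11) + Nat.fib (2*a+10) := fibcast (2*a+10)
    have hnew : Pe (a+1) := by
      rw [Pe]
      have e1 : 2*(a+1) = 2*a+2 := by ring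
      rw [e1]
      have e2 : 2*a+2+9 = 2*a+11 := by omega
      rw [e2, hSe, hf1]
      push_cast
      linear_combination he + ho + hJ
    refine ⟨hnew, ?_⟩
    rw [Pe] at hnew
    have hSo := S_odd a
    rw [Po]
    have e1 : 2*(a+1)+1 = 2*a+3 := by ring
    rw [e1]
    have e2 : 2*(a+1)+10 = 2*a+12 := by omega
    rw [e2, hSo, hf2]
    have e3 : 2*(a+1) = 2*a+2 := by ring
    rw [e3] at hnew
    have e4 : 2*a+2+9 = 2*a+11 := by omega
    rw [e4] at hnew
    push_cast
    push_cast at hnew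
    linear_combination hnew + ho

end T5aux

theorem theoremT5 (n : ℕ) :
    48 * (∑ k ∈ Finset.range (n / 2 + 1), ∑ q ∈ Finset.range (k + 1),
          ∑ r ∈ Finset.range (q + 1), ∑ s ∈ Finset.range (r + 1),
            ∑ t ∈ Finset.range (s + 1), ((n - k).choose t : ℤ)) =
      48 * (Nat.fib (n + 9) : ℤ) -
        2 ^ ((n + 1) / 2) *
          (((n + 1) / 2 : ℕ) ^ 3 + 30 * ((n + 1) / 2 : ℕ) ^ 2 +
            317 * ((n + 1) / 2 : ℕ) + 1296 +
            (-1) ^ n *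
              (3 * ((n + 1) / 2 : ℕ) ^ 2 + 57 * ((n + 1) / 2 : ℕ) + 288)) := by
  have hsum : (∑ k ∈ Finset.range (n / 2 + 1), ∑ q ∈ Finset.range (k + 1),
          ∑ r ∈ Finset.range (q + 1), ∑ s ∈ Finset.range (r + 1),
            ∑ t ∈ Finset.range (s + 1), ((n - k).choose t : ℤ)) = T5aux.S n := rfl
  rw [hsum]
  obtain ⟨a, rfl | rfl⟩ := Nat.even_or_odd' n
  · have h := (T5aux.main a).1
    rw [T5aux.Pe] at h
    have hp : (2*a+1)/2 = a := by omega
    rw [hp] at *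
    have hpar : (-1 : ℤ)^(2*a) = 1 := by
      rw [pow_mul]; norm_num
    rw [hpar]
    push_cast at h ⊢
    linear_combination h
  · have h := (T5aux.main a).2
    rw [T5aux.Po] at h
    have hp : (2*a+1+1)/2 = a+1 := by omega
    rw [hp] at *
    have hpar : (-1 : ℤ)^(2*a+1) = -1 := by
      rw [pow_succ, pow_mul]; norm_num
    rw [hpar]
    have e : 2*a+1+9 = 2*a+10 := by ring
    rw [e]
    push_cast at h ⊢
    linear_combination h
end
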